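/- Intersection criterion: In the recursive construction I_{m,r} with sufficiently small parameter ε at each level, the following are equivalent almost surely: (1) conv(A_{m,r}) ∩ conv(B_{m,r}) = ∅; (2) A^{(i)}_{m,r−1} ∩ B^{(i)}_{m,r−1} = ∅ (where i is the index defining Bob's copy); (3) A_{m,r} ∩ B_{m,r} = ∅. Moreover, when the sets are disjoint they are separated by a vector with strictly positive entries: there exists u ∈ R² with u > 0 entrywise, u·a < 1 for all a ∈ A_{m,r}, and u·b > 1 for all b ∈ B_{m,r}. -/

import Mathlib

open Real

noncomputable section

/-- m evenly spaced points on the positive quarter of the unit circle. -/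
def pcirc (m : ℕ) (j : Fin m) : Fin 2 → ℝ :=
  ![Real.cos ((((j : ℕ) : ℝ) + 1) * π / (2 * ((m : ℝ) + 1))),
    Real.sin ((((j : ℕ) : ℝ) + 1) * π / (2 * ((m : ℝ) + 1)))]

/-- The rotation U_j sending e₂ to p_j. -/
def Urot (m : ℕ) (j : Fin m) : Matrix (Fin 2) (Fin 2) ℝ :=
  !![Real.sin ((((j : ℕ) : ℝ) + 1) * π / (2 * ((m : ℝ) + 1))),
     Real.cos ((((j : ℕ) : ℝ) + 1) * π / (2 * ((m : ℝ) + 1)));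
     -Real.cos ((((j : ℕ) : ℝ) + 1) * π / (2 * ((m : ℝ) + 1))),
     Real.sin ((((j : ℕ) : ℝ) + 1) * π / (2 * ((m : ℝ) + 1)))]

/-- The affine map T_j(v) = U_j · diag(−ε, −ε²) · v + p_j. -/
def Tmap (m : ℕ) (ε : ℝ) (j : Fin m) (v : Fin 2 → ℝ) : Fin 2 → ℝ :=
  (Urot m j).mulVec ![-ε * v 0, -(ε ^ 2) * v 1] + pcirc m j

/-- The support of the recursive distribution I_{m,r} (indexed from 0). -/
def Isupp (m : ℕ) (ε : ℕ → ℝ) : ℕ → Set (Set (Fin 2 → ℝ) × Set (Fin 2 → ℝ))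
  | 0 => {AB | AB = ({fun _ => 0}, {fun _ => 0}) ∨ AB = ({fun _ => 0}, ∅)}
  | r + 1 =>
    {AB | ∃ (F : Fin m → Set (Fin 2 → ℝ) × Set (Fin 2 → ℝ)) (i : Fin m),
      (∀ j, F j ∈ Isupp m ε r) ∧
      AB.1 = ⋃ j, Tmap m (ε r) j '' (F j).2 ∧
      AB.2 = Tmap m (ε r) i '' (F i).1}

/-!
Every point of a support pair lies in the square `[-2, 2]²`. Disjointness of a pair propagates one
level up together with a separating line `w ⬝ᵥ v = 1` whose normal has entries in
`[sin x₀ / 2, 3]`, where `x₀ = π / (2(m + 1))` is the angular gap between consecutive `p_j`: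
`T_i` maps that line onto a line `n ⬝ᵥ x = 1 - t` whose normal `n` is a slight rotation of `p_i`,
and because `ε` is small against `1 - cos x₀`, every other cluster `T_j(B^{(j)})` lies strictly
below it. A separating line also separates the convex hulls, which gives (2) ⟹ (1); the
implications (1) ⟹ (3) ⟹ (2) are immediate.
-/

namespace IntersectionCriterion

def baseAngle (m : ℕ) : ℝ := π / (2 * ((m : ℝ) + 1))

def angle (m : ℕ) (j : Fin m) : ℝ := (((j : ℕ) : ℝ) + 1) * π / (2 * ((m : ℝ) + 1))

-- The factor `sin (baseAngle m)` absorbs `1 / w 1 ≤ 2 / sin (baseAngle m)` in the tilt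
-- `s = ε * w 0 / w 1` and the shift `t = ε ^ 2 / w 1` of `exists_separates_Tmap`.
def eps (m : ℕ) : ℝ := sin (baseAngle m) * (1 - cos (baseAngle m)) / 100

def normal (θ s : ℝ) : Fin 2 → ℝ := ![cos θ + s * sin θ, sin θ - s * cos θ]

def Separates {ι : Type*} [Fintype ι] (u : ι → ℝ) (A B : Set (ι → ℝ)) : Prop :=
  (∀ a ∈ A, u ⬝ᵥ a < 1) ∧ ∀ b ∈ B, 1 < u ⬝ᵥ b

lemma inter_eq_empty_of_iUnion_image_inter_image_eq_empty {ι α β : Type*}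
    {f : ι → α → β} {G : ι → Set α} {H : Set α} (i : ι)
    (h : (⋃ j, f j '' G j) ∩ f i '' H = ∅) : H ∩ G i = ∅ :=
  Set.eq_empty_of_forall_notMem fun x hx =>
    (Set.eq_empty_iff_forall_notMem.1 h) (f i x)
      ⟨Set.mem_iUnion.2 ⟨i, Set.mem_image_of_mem _ hx.2⟩, Set.mem_image_of_mem _ hx.1⟩

lemma Separates.convexHull_inter_eq_empty {ι : Type*} [Fintype ι] {u : ι → ℝ}
    {A B : Set (ι → ℝ)} (h : Separates u A B) : convexHull ℝ A ∩ convexHull ℝ B = ∅ := by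
  have hu : IsLinearMap ℝ (u ⬝ᵥ ·) := ⟨dotProduct_add u, fun c x => dotProduct_smul c u x⟩
  have hA : convexHull ℝ A ⊆ {x | u ⬝ᵥ x < 1} := convexHull_min h.1 (convex_halfSpace_lt hu 1)
  have hB : convexHull ℝ B ⊆ {x | 1 < u ⬝ᵥ x} := convexHull_min h.2 (convex_halfSpace_gt hu 1)
  exact Set.eq_empty_of_forall_notMem fun x hx =>
    lt_asymm (show u ⬝ᵥ x < 1 from hA hx.1) (hB hx.2)

section Angles

variable {m : ℕ}

lemma baseAngle_pos (m : ℕ) : 0 < baseAngle m := by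
  unfold baseAngle; positivity

lemma angle_eq (j : Fin m) : angle m j = (((j : ℕ) : ℝ) + 1) * baseAngle m := by
  rw [angle, baseAngle, mul_div_assoc]

lemma baseAngle_le_angle (j : Fin m) : baseAngle m ≤ angle m j := by
  rw [angle_eq]
  nlinarith [baseAngle_pos m, (Nat.cast_nonneg j : (0 : ℝ) ≤ (j : ℕ))]

lemma angle_le (j : Fin m) : angle m j ≤ π / 2 - baseAngle m := by
  have hj : ((j : ℕ) : ℝ) + 1 ≤ m := by exact_mod_cast j.isLt
  have hm : (m : ℝ) * baseAngle m + baseAngle m = π / 2 := by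
    unfold baseAngle; field_simp
  rw [angle_eq]
  nlinarith [baseAngle_pos m]

lemma baseAngle_le_pi_div_two (m : ℕ) : baseAngle m ≤ π / 2 := by
  unfold baseAngle
  gcongr
  linarith [(Nat.cast_nonneg m : (0 : ℝ) ≤ m)]

lemma sin_baseAngle_pos (m : ℕ) : 0 < sin (baseAngle m) :=
  sin_pos_of_pos_of_lt_pi (baseAngle_pos m) (by linarith [baseAngle_le_pi_div_two m, pi_pos])

lemma cos_baseAngle_nonneg (m : ℕ) : 0 ≤ cos (baseAngle m) :=
  cos_nonneg_of_mem_Icc ⟨by linarith [baseAngle_pos m, pi_pos], baseAngle_le_pi_div_two m⟩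

lemma cos_baseAngle_lt_one (m : ℕ) : cos (baseAngle m) < 1 := by
  simpa using cos_lt_cos_of_nonneg_of_le_pi le_rfl
    (by linarith [baseAngle_le_pi_div_two m, pi_pos]) (baseAngle_pos m)

lemma sin_baseAngle_le_sin_angle (j : Fin m) : sin (baseAngle m) ≤ sin (angle m j) :=
  sin_le_sin_of_le_of_le_pi_div_two (by linarith [baseAngle_pos m, pi_pos])
    (by linarith [angle_le j, baseAngle_pos m]) (baseAngle_le_angle j)

lemma sin_baseAngle_le_cos_angle (j : Fin m) : sin (baseAngle m) ≤ cos (angle m j) := by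
  rw [← cos_pi_div_two_sub]
  exact cos_le_cos_of_nonneg_of_le_pi (by linarith [baseAngle_le_angle j, baseAngle_pos m])
    (by linarith [baseAngle_pos m, pi_pos]) (angle_le j)

lemma cos_angle_sub_angle_le {i j : Fin m} (hij : i ≠ j) :
    cos (angle m i - angle m j) ≤ cos (baseAngle m) := by
  have hsep : baseAngle m ≤ |angle m i - angle m j| := by
    have hij' : (1 : ℝ) ≤ |((i : ℕ) : ℝ) - (j : ℕ)| := by
      rcases Fin.lt_or_lt_of_ne hij with h | h
      · have h' : ((i : ℕ) : ℝ) + 1 ≤ (j : ℕ) := by exact_mod_cast h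
        exact le_abs.2 (Or.inr (by linarith))
      · have h' : ((j : ℕ) : ℝ) + 1 ≤ (i : ℕ) := by exact_mod_cast h
        exact le_abs.2 (Or.inl (by linarith))
    rw [angle_eq, angle_eq, ← sub_mul, add_sub_add_right_eq_sub, abs_mul,
      abs_of_pos (baseAngle_pos m)]
    nlinarith [baseAngle_pos m]
  have hle : |angle m i - angle m j| ≤ π := by
    rw [abs_le]
    constructor <;> linarith [pi_pos, baseAngle_pos m, angle_le i, angle_le j,
      baseAngle_le_angle i, baseAngle_le_angle j]
  rw [← cos_abs]
  exact cos_le_cos_of_nonneg_of_le_pi (baseAngle_pos m).le hle hsep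

end Angles

lemma eps_pos (m : ℕ) : 0 < eps m := by
  have := sin_baseAngle_pos m
  have := cos_baseAngle_lt_one m
  unfold eps
  nlinarith

lemma eps_le (m : ℕ) : eps m ≤ (1 - cos (baseAngle m)) / 100 := by
  have := sin_le_one (baseAngle m)
  have := cos_baseAngle_lt_one m
  unfold eps
  nlinarith

section Tmap

variable {m : ℕ}

lemma Tmap_eq (ε : ℝ) (j : Fin m) (v : Fin 2 → ℝ) :
    Tmap m ε j v =
      ![cos (angle m j) + ε * -sin (angle m j) * v 0 + ε ^ 2 * -cos (angle m j) * v 1,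
        sin (angle m j) + ε * cos (angle m j) * v 0 + ε ^ 2 * -sin (angle m j) * v 1] := by
  ext k
  fin_cases k <;>
    simp [Tmap, Urot, pcirc, angle] <;> ring

lemma abs_add_mul_add_mul_le_two {c d e x y ε : ℝ} (hc : |c| ≤ 1) (hd : |d| ≤ 1) (he : |e| ≤ 1)
    (hx : |x| ≤ 2) (hy : |y| ≤ 2) (hε0 : 0 ≤ ε) (hε : ε ≤ 1 / 100) :
    |c + ε * d * x + ε ^ 2 * e * y| ≤ 2 :=
  calc |c + ε * d * x + ε ^ 2 * e * y|
      ≤ |c| + |ε * d * x| + |ε ^ 2 * e * y| := abs_add_three _ _ _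
    _ = |c| + ε * (|d| * |x|) + ε ^ 2 * (|e| * |y|) := by
        simp only [abs_mul, abs_of_nonneg hε0, abs_of_nonneg (sq_nonneg ε), mul_assoc]
    _ ≤ 1 + ε * (1 * 2) + ε ^ 2 * (1 * 2) := by gcongr
    _ ≤ 2 := by nlinarith

lemma abs_Tmap_le_two {ε : ℝ} (hε0 : 0 ≤ ε) (hε : ε ≤ 1 / 100) (j : Fin m) {v : Fin 2 → ℝ}
    (hv : ∀ k, |v k| ≤ 2) (k : Fin 2) : |Tmap m ε j v k| ≤ 2 := by
  have hsin := abs_sin_le_one (angle m j)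
  have hcos := abs_cos_le_one (angle m j)
  rw [Tmap_eq]
  fin_cases k
  · exact abs_add_mul_add_mul_le_two hcos (by rwa [abs_neg]) (by rwa [abs_neg]) (hv 0) (hv 1)
      hε0 hε
  · exact abs_add_mul_add_mul_le_two hsin hcos (by rwa [abs_neg]) (hv 0) (hv 1) hε0 hε

lemma normal_dotProduct_Tmap (θ s ε : ℝ) (j : Fin m) (v : Fin 2 → ℝ) :
    normal θ s ⬝ᵥ Tmap m ε j v =
      (1 - ε ^ 2 * v 1) * (cos (θ - angle m j) + s * sin (θ - angle m j)) +
        ε * v 0 * (sin (θ - angle m j) - s * cos (θ - angle m j)) := by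
  rw [Tmap_eq, cos_sub, sin_sub]
  simp [normal, dotProduct, Fin.sum_univ_two]
  ring

lemma normal_dotProduct_Tmap_self (s ε : ℝ) (j : Fin m) (v : Fin 2 → ℝ) :
    normal (angle m j) s ⬝ᵥ Tmap m ε j v = 1 - ε * s * v 0 - ε ^ 2 * v 1 := by
  rw [normal_dotProduct_Tmap, sub_self, cos_zero, sin_zero]
  ring

end Tmap

section Step

variable {m : ℕ}

lemma normal_dotProduct_Tmap_lt_of_ne {i j : Fin m} (hij : i ≠ j) {s t ε : ℝ} {v : Fin 2 → ℝ}
    (hv : ∀ k, |v k| ≤ 2) (hs0 : 0 ≤ s) (hs : s ≤ 6 * (1 - cos (baseAngle m)) / 100)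
    (hε0 : 0 ≤ ε) (hε : ε ≤ (1 - cos (baseAngle m)) / 100)
    (ht : t ≤ (1 - cos (baseAngle m)) / 100) :
    normal (angle m i) s ⬝ᵥ Tmap m ε j v < 1 - t := by
  rw [normal_dotProduct_Tmap]
  set c := cos (angle m i - angle m j)
  set d := sin (angle m i - angle m j)
  have hc : c ≤ cos (baseAngle m) := cos_angle_sub_angle_le hij
  have hκ : 1 - cos (baseAngle m) ≤ 1 := by linarith [cos_baseAngle_nonneg m]
  have hsd : s * d ≤ s := by nlinarith [sin_le_one (angle m i - angle m j)]
  have hM : |c + s * d| ≤ 1 + s := (abs_add_le _ _).trans (by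
    rw [abs_mul, abs_of_nonneg hs0]; nlinarith [abs_cos_le_one (angle m i - angle m j),
      abs_sin_le_one (angle m i - angle m j), abs_nonneg d])
  have hK : |d - s * c| ≤ 1 + s := (abs_sub _ _).trans (by
    rw [abs_mul, abs_of_nonneg hs0]; nlinarith [abs_cos_le_one (angle m i - angle m j),
      abs_sin_le_one (angle m i - angle m j), abs_nonneg c])
  have hy : -(ε ^ 2 * v 1 * (c + s * d)) ≤ ε ^ 2 * (2 * (1 + s)) :=
    calc -(ε ^ 2 * v 1 * (c + s * d)) ≤ |ε ^ 2 * v 1 * (c + s * d)| := neg_le_abs _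
      _ = ε ^ 2 * (|v 1| * |c + s * d|) := by
        rw [abs_mul, abs_mul, abs_of_nonneg (sq_nonneg ε), mul_assoc]
      _ ≤ ε ^ 2 * (2 * (1 + s)) := by gcongr; exact hv 1
  have hx : ε * v 0 * (d - s * c) ≤ ε * (2 * (1 + s)) :=
    calc ε * v 0 * (d - s * c) ≤ |ε * v 0 * (d - s * c)| := le_abs_self _
      _ = ε * (|v 0| * |d - s * c|) := by rw [abs_mul, abs_mul, abs_of_nonneg hε0, mul_assoc]
      _ ≤ ε * (2 * (1 + s)) := by gcongr; exact hv 0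
  have hκ0 : 0 < 1 - cos (baseAngle m) := by linarith [cos_baseAngle_lt_one m]
  have hεs : ε * (2 * (1 + s)) ≤ 3 * (1 - cos (baseAngle m)) / 100 := by nlinarith
  have hε2 : ε ^ 2 * (2 * (1 + s)) ≤ (1 - cos (baseAngle m)) / 100 := by nlinarith
  linarith

lemma inv_smul_normal_mem_Icc (i : Fin m) {s t : ℝ} (hs0 : 0 ≤ s)
    (hs : s ≤ sin (baseAngle m) / 2) (hs' : s ≤ 1 / 10) (ht0 : 0 ≤ t) (ht : t ≤ 1 / 100)
    (k : Fin 2) : ((1 - t)⁻¹ • normal (angle m i) s) k ∈ Set.Icc (sin (baseAngle m) / 2) 3 := by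
  have hsin := sin_baseAngle_le_sin_angle i
  have hcos := sin_baseAngle_le_cos_angle i
  have hsin1 := sin_le_one (angle m i)
  have hcos1 := cos_le_one (angle m i)
  have hσ := sin_baseAngle_pos m
  rw [Pi.smul_apply, smul_eq_mul, ← div_eq_inv_mul, Set.mem_Icc,
    le_div_iff₀ (by linarith), div_le_iff₀ (by linarith)]
  fin_cases k <;> simp only [normal, Fin.zero_eta, Fin.mk_one, Matrix.cons_val_zero,
    Matrix.cons_val_one] <;> constructor <;> nlinarith

lemma exists_separates_Tmap {ε : ℝ} (hε0 : 0 < ε) (hε : ε ≤ eps m) (i : Fin m)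
    {w : Fin 2 → ℝ} (hw : ∀ k, w k ∈ Set.Icc (sin (baseAngle m) / 2) 3)
    {G : Fin m → Set (Fin 2 → ℝ)} {H : Set (Fin 2 → ℝ)}
    (hG : ∀ j, ∀ v ∈ G j, ∀ k, |v k| ≤ 2) (hsep : Separates w H (G i)) :
    ∃ u : Fin 2 → ℝ, (∀ k, u k ∈ Set.Icc (sin (baseAngle m) / 2) 3) ∧
      Separates u (⋃ j, Tmap m ε j '' G j) (Tmap m ε i '' H) := by
  set σ := sin (baseAngle m)
  set κ := 1 - cos (baseAngle m)
  have hσ0 : 0 < σ := sin_baseAngle_pos m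
  have hσ1 : σ ≤ 1 := sin_le_one _
  have hκ0 : 0 < κ := by linarith [cos_baseAngle_lt_one m]
  have hκ1 : κ ≤ 1 := by linarith [cos_baseAngle_nonneg m]
  have hκσ : κ ≤ σ ^ 2 := by
    nlinarith [sin_sq_add_cos_sq (baseAngle m), cos_baseAngle_nonneg m]
  have hεκ : ε ≤ κ / 100 := hε.trans (eps_le m)
  obtain ⟨⟨hw0l, hw0u⟩, ⟨hw1l, hw1u⟩⟩ := And.intro (hw 0) (hw 1)
  have hw0 : 0 < w 0 := by linarith
  have hw1 : 0 < w 1 := by linarith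
  -- `s` and `t` are chosen so that `Tmap m ε i` carries the separating line `w ⬝ᵥ v = 1` onto
  -- the line `normal (angle m i) s ⬝ᵥ x = 1 - t`; the other clusters lie strictly below it.
  set s := ε * w 0 / w 1
  set t := ε ^ 2 / w 1
  have hs0 : 0 ≤ s := by positivity
  have ht0 : 0 < t := by positivity
  have hs : s ≤ 6 * κ / 100 :=
    calc s ≤ ε * 3 / (σ / 2) := by unfold s; gcongr
      _ ≤ 6 * κ / 100 := by
        rw [div_le_iff₀ (by positivity)]; unfold eps at hε; nlinarith
  have ht : t ≤ κ / 100 :=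
    calc t ≤ ε ^ 2 / (σ / 2) := by unfold t; gcongr
      _ ≤ κ / 100 := by
        rw [div_le_iff₀ (by positivity)]; unfold eps at hε; nlinarith
  have hself : ∀ v, normal (angle m i) s ⬝ᵥ Tmap m ε i v = 1 - t * (w ⬝ᵥ v) := by
    intro v
    rw [normal_dotProduct_Tmap_self]
    simp only [dotProduct, Fin.sum_univ_two, s, t]
    field_simp
    ring
  have h1t : 0 < 1 - t := by linarith
  refine ⟨(1 - t)⁻¹ • normal (angle m i) s,
    inv_smul_normal_mem_Icc i hs0 (by nlinarith) (by linarith) ht0.le (by linarith), ?_, ?_⟩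
  · simp only [Set.mem_iUnion, Set.mem_image]
    rintro _ ⟨j, v, hv, rfl⟩
    rw [smul_dotProduct, smul_eq_mul, ← div_eq_inv_mul, div_lt_one h1t]
    rcases eq_or_ne j i with rfl | hji
    · nlinarith [hself v, hsep.2 v hv]
    · exact normal_dotProduct_Tmap_lt_of_ne hji.symm (hG j v hv) hs0 hs hε0.le hεκ ht
  · rintro _ ⟨v, hv, rfl⟩
    rw [smul_dotProduct, smul_eq_mul, ← div_eq_inv_mul, one_lt_div h1t]
    nlinarith [hself v, hsep.1 v hv]

end Step

section Support

variable {m : ℕ} {ε : ℕ → ℝ}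

lemma abs_le_two_of_mem_Isupp (hε0 : ∀ l, 0 < ε l) (hε : ∀ l, ε l ≤ eps m) :
    ∀ r, ∀ AB ∈ Isupp m ε r, ∀ v ∈ AB.1 ∪ AB.2, ∀ k, |v k| ≤ 2
  | 0, AB, hAB, v, hv, k => by
    rcases hAB with rfl | rfl <;> simp_all
  | r + 1, AB, ⟨F, i, hF, h1, h2⟩, v, hv, k => by
    have hε1 : ε r ≤ 1 / 100 := by linarith [hε r, eps_le m, cos_baseAngle_nonneg m]
    rw [h1, h2] at hv
    rcases hv with ⟨_, ⟨j, rfl⟩, x, hx, rfl⟩ | ⟨x, hx, rfl⟩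
    · exact abs_Tmap_le_two (hε0 r).le hε1 j
        (abs_le_two_of_mem_Isupp hε0 hε r (F j) (hF j) x (Or.inr hx)) k
    · exact abs_Tmap_le_two (hε0 r).le hε1 i
        (abs_le_two_of_mem_Isupp hε0 hε r (F i) (hF i) x (Or.inl hx)) k

lemma exists_separates_of_mem_Isupp (hε0 : ∀ l, 0 < ε l) (hε : ∀ l, ε l ≤ eps m) :
    ∀ r, ∀ AB ∈ Isupp m ε r, AB.1 ∩ AB.2 = ∅ →
      ∃ u : Fin 2 → ℝ, (∀ k, u k ∈ Set.Icc (sin (baseAngle m) / 2) 3) ∧ Separates u AB.1 AB.2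
  | 0, AB, hAB, hdis => by
    rcases hAB with rfl | rfl
    · simp at hdis
    · refine ⟨fun _ => 1, fun _ => ⟨by linarith [sin_le_one (baseAngle m)], by norm_num⟩, ?_⟩
      simp [Separates]
  | r + 1, AB, ⟨F, i, hF, h1, h2⟩, hdis => by
    rw [h1, h2] at hdis ⊢
    obtain ⟨w, hw, hsep⟩ := exists_separates_of_mem_Isupp hε0 hε r (F i) (hF i)
      (inter_eq_empty_of_iUnion_image_inter_image_eq_empty i hdis)
    exact exists_separates_Tmap (hε0 r) (hε r) i hw
      (fun j v hv => abs_le_two_of_mem_Isupp hε0 hε r (F j) (hF j) v (Or.inr hv)) hsep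

end Support

end IntersectionCriterion

open IntersectionCriterion

theorem intersection_criterion_general (m : ℕ) :
    ∃ ε : ℕ → ℝ, (∀ l, 0 < ε l) ∧
      ∀ (r : ℕ) (F : Fin m → Set (Fin 2 → ℝ) × Set (Fin 2 → ℝ)),
        (∀ j, F j ∈ Isupp m ε r) → ∀ i : Fin m,
        ((convexHull ℝ (⋃ j, Tmap m (ε r) j '' (F j).2) ∩
            convexHull ℝ (Tmap m (ε r) i '' (F i).1) = ∅) ↔
          ((F i).1 ∩ (F i).2 = ∅)) ∧
        ((convexHull ℝ (⋃ j, Tmap m (ε r) j '' (F j).2) ∩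
            convexHull ℝ (Tmap m (ε r) i '' (F i).1) = ∅) ↔
          ((⋃ j, Tmap m (ε r) j '' (F j).2) ∩
            (Tmap m (ε r) i '' (F i).1) = ∅)) ∧
        ((⋃ j, Tmap m (ε r) j '' (F j).2) ∩ (Tmap m (ε r) i '' (F i).1) = ∅ →
          ∃ u : Fin 2 → ℝ, 0 < u 0 ∧ 0 < u 1 ∧
            (∀ a ∈ ⋃ j, Tmap m (ε r) j '' (F j).2, (∑ l, u l * a l) < 1) ∧
            (∀ b ∈ Tmap m (ε r) i '' (F i).1, 1 < (∑ l, u l * b l))) := by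
  have hε0 : ∀ l : ℕ, 0 < eps m := fun _ => eps_pos m
  refine ⟨fun _ => eps m, hε0, fun r F hF i => ?_⟩
  set A := ⋃ j, Tmap m (eps m) j '' (F j).2
  set B := Tmap m (eps m) i '' (F i).1
  have hsep : (F i).1 ∩ (F i).2 = ∅ →
      ∃ u : Fin 2 → ℝ, (∀ k, u k ∈ Set.Icc (sin (baseAngle m) / 2) 3) ∧ Separates u A B := by
    intro h
    obtain ⟨w, hw, hw'⟩ := exists_separates_of_mem_Isupp hε0 (fun _ => le_rfl) r (F i) (hF i) h
    exact exists_separates_Tmap (eps_pos m) le_rfl i hw (fun j v hv =>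
      abs_le_two_of_mem_Isupp hε0 (fun _ => le_rfl) r (F j) (hF j) v (Or.inr hv)) hw'
  have hhull : (F i).1 ∩ (F i).2 = ∅ → convexHull ℝ A ∩ convexHull ℝ B = ∅ := fun h =>
    (hsep h).elim fun _ hu => hu.2.convexHull_inter_eq_empty
  have hsets : convexHull ℝ A ∩ convexHull ℝ B = ∅ → A ∩ B = ∅ :=
    Set.subset_eq_empty (Set.inter_subset_inter (subset_convexHull ℝ A) (subset_convexHull ℝ B))
  have hpieces : A ∩ B = ∅ → (F i).1 ∩ (F i).2 = ∅ :=
    inter_eq_empty_of_iUnion_image_inter_image_eq_empty i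
  refine ⟨⟨hpieces ∘ hsets, hhull⟩, ⟨hsets, hhull ∘ hpieces⟩, fun h => ?_⟩
  obtain ⟨u, hu, huA, huB⟩ := hsep (hpieces h)
  have hσ := sin_baseAngle_pos m
  exact ⟨u, by linarith [(hu 0).1], by linarith [(hu 1).1], huA, huB⟩

/-- Intersection criterion: with sufficiently small parameters ε at each
level, for A = ⋃_j T_j(B^{(j)}) and B = T_i(A^{(i)}) built from support
elements of level r: (1) conv(A) ∩ conv(B) = ∅ iff (2) A^{(i)} ∩ B^{(i)} = ∅
iff (3) A ∩ B = ∅; moreover disjoint sets are separated by a vector with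
strictly positive entries. -/
theorem intersection_criterion (m : ℕ) (hm : 1 ≤ m) :
    ∃ ε : ℕ → ℝ, (∀ l, 0 < ε l) ∧
      ∀ (r : ℕ) (F : Fin m → Set (Fin 2 → ℝ) × Set (Fin 2 → ℝ)),
        (∀ j, F j ∈ Isupp m ε r) → ∀ i : Fin m,
        ((convexHull ℝ (⋃ j, Tmap m (ε r) j '' (F j).2) ∩
            convexHull ℝ (Tmap m (ε r) i '' (F i).1) = ∅) ↔
          ((F i).1 ∩ (F i).2 = ∅)) ∧
        ((convexHull ℝ (⋃ j, Tmap m (ε r) j '' (F j).2) ∩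
            convexHull ℝ (Tmap m (ε r) i '' (F i).1) = ∅) ↔
          ((⋃ j, Tmap m (ε r) j '' (F j).2) ∩
            (Tmap m (ε r) i '' (F i).1) = ∅)) ∧
        ((⋃ j, Tmap m (ε r) j '' (F j).2) ∩ (Tmap m (ε r) i '' (F i).1) = ∅ →
          ∃ u : Fin 2 → ℝ, 0 < u 0 ∧ 0 < u 1 ∧
            (∀ a ∈ ⋃ j, Tmap m (ε r) j '' (F j).2, (∑ l, u l * a l) < 1) ∧
            (∀ b ∈ Tmap m (ε r) i '' (F i).1, 1 < (∑ l, u l * b l))) :=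
  intersection_criterion_general m

end
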